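/- arXiv:1706.05632 — 4 statements merged into one kernel-verified Lean document; each statement's English description precedes it below -/
import Mathlib

section
/- Let G be an abelian residually finite group and Ḡ its odometer. The map ψ : C(Ḡ, G) → Ḡ given by ψ(φ) = φ(e) is a group isomorphism from the centralizer of the odometer action onto Ḡ. In particular, the centralizer C(Ḡ, G) is abelian. -/
variable {G : Type*} [CommGroup G]

instance quotBotTop (H : Subgroup G) : TopologicalSpace (G ⧸ H) := ⊥

/-- The inverse limit of the quotients `G ⧸ N n`, realized as the subgroup of the
product `∀ n, G ⧸ N n` consisting of compatible sequences. -/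
def odometerSubgroup (N : ℕ → Subgroup G) [∀ n, (N n).Normal]
    (hle : ∀ n, N (n + 1) ≤ N n) : Subgroup (∀ n, G ⧸ N n) where
  carrier := {x | ∀ n, QuotientGroup.map (N (n + 1)) (N n) (MonoidHom.id G)
      (fun g hg => hle n hg) (x (n + 1)) = x n}
  mul_mem' := by
    intro a b ha hb n
    rw [Pi.mul_apply, Pi.mul_apply, map_mul, ha n, hb n]
  one_mem' := by
    intro n
    rw [Pi.one_apply, Pi.one_apply, map_one]
  inv_mem' := by
    intro a ha n
    rw [Pi.inv_apply, Pi.inv_apply, map_inv, ha n]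

/-- The natural map `G → Ḡ`, `g ↦ (g G₁, g G₂, …)`. -/
def odIncl (N : ℕ → Subgroup G) [∀ n, (N n).Normal] (hle : ∀ n, N (n + 1) ≤ N n)
    (g : G) : odometerSubgroup N hle :=
  ⟨fun _ => QuotientGroup.mk g, fun n => by first | rfl | exact QuotientGroup.map_mk _ _ _ _ g | simp [QuotientGroup.map_mk]; rfl⟩


/-- The centralizer of the odometer action: all homeomorphisms of `Ḡ` commuting with
the left-translation action of `G`. -/
def odometerCentralizer (N : ℕ → Subgroup G) [∀ n, (N n).Normal]
    (hle : ∀ n, N (n + 1) ≤ N n) : Type _ :=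
  {φ : odometerSubgroup N hle ≃ₜ odometerSubgroup N hle //
    ∀ (g : G) (x : odometerSubgroup N hle),
      φ (odIncl N hle g * x) = odIncl N hle g * φ x}

/-! An element `φ` of the centralizer agrees with right translation by `φ 1` on the dense
image of `G`, hence everywhere by continuity. So `φ ↦ φ 1` is injective, right translations
show it is onto, and composition corresponds to multiplication in the abelian group `Ḡ`. -/

instance QuotientGroup.discreteTopology_quotBotTop (H : Subgroup G) :
    DiscreteTopology (G ⧸ H) :=
  ⟨rfl⟩

instance QuotientGroup.isTopologicalGroup_quotBotTop (H : Subgroup G) :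
    IsTopologicalGroup (G ⧸ H) where
  continuous_mul := continuous_of_discreteTopology
  continuous_inv := continuous_of_discreteTopology

section Odometer

variable (N : ℕ → Subgroup G) [∀ n, (N n).Normal] (hle : ∀ n, N (n + 1) ≤ N n)

lemma odometerSubgroup.apply_eq_of_le {x y : odometerSubgroup N hle} {i m : ℕ} (him : i ≤ m)
    (h : x.1 m = y.1 m) : x.1 i = y.1 i := by
  induction m, him using Nat.le_induction with
  | base => exact h
  | succ m _ ih => exact ih (by rw [← x.2 m, ← y.2 m, h])

lemma denseRange_odIncl : DenseRange (odIncl N hle) := by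
  intro x
  rw [mem_closure_iff]
  intro U hU hxU
  obtain ⟨V, hV, rfl⟩ := isOpen_induced_iff.1 hU
  obtain ⟨I, u, hIu, hsub⟩ := isOpen_pi_iff.1 hV x.1 hxU
  obtain ⟨g, hg⟩ := QuotientGroup.mk_surjective (x.1 (I.sup id))
  refine ⟨odIncl N hle g, hsub fun i hi => ?_, g, rfl⟩
  have hi_le : i ≤ I.sup id := Finset.le_sup (f := id) hi
  rw [odometerSubgroup.apply_eq_of_le N hle (x := odIncl N hle g) hi_le hg]
  exact (hIu i hi).2

lemma odometerCentralizer.apply_eq_mul (φ : odometerCentralizer N hle)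
    (x : odometerSubgroup N hle) : φ.1 x = x * φ.1 1 := by
  refine congrFun (Continuous.ext_on (denseRange_odIncl N hle) φ.1.continuous
    (continuous_id.mul continuous_const) ?_) x
  rintro _ ⟨g, rfl⟩
  simpa using φ.2 g 1

end Odometer

theorem odometer_centralizer_iso_general (N : ℕ → Subgroup G) [∀ n, (N n).Normal]
    (hle : ∀ n, N (n + 1) ≤ N n) :
    Function.Bijective (fun φ : odometerCentralizer N hle => φ.1 1) ∧
    (∀ φ₁ φ₂ : odometerCentralizer N hle, φ₁.1 (φ₂.1 1) = φ₁.1 1 * φ₂.1 1) ∧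
    (∀ φ₁ φ₂ : odometerCentralizer N hle, ∀ x, φ₁.1 (φ₂.1 x) = φ₂.1 (φ₁.1 x)) := by
  have key := odometerCentralizer.apply_eq_mul N hle
  refine ⟨⟨fun φ₁ φ₂ h => ?injective, fun y => ?surjective⟩, fun φ₁ φ₂ => ?mul, ?comm⟩
  case injective =>
    refine Subtype.ext (Homeomorph.ext fun x => ?_)
    rw [key φ₁, key φ₂]
    exact congrArg (x * ·) h
  case surjective =>
    exact ⟨⟨Homeomorph.mulRight y, fun g x => mul_assoc _ _ _⟩, one_mul y⟩
  case mul => rw [key φ₁, mul_comm]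
  case comm =>
    intro φ₁ φ₂ x
    rw [key φ₁, key φ₂ x, key φ₂ (φ₁.1 x), key φ₁ x, mul_right_comm]

/-- For an abelian residually finite group `G`, the map
`ψ : C(Ḡ, G) → Ḡ`, `ψ(φ) = φ(e)`, is a group isomorphism from the centralizer of the
odometer onto `Ḡ`: it is bijective and multiplicative (where multiplication in the
centralizer is composition).  In particular, the centralizer is abelian. -/
theorem odometer_centralizer_iso (N : ℕ → Subgroup G) [∀ n, (N n).Normal]
    (hle : ∀ n, N (n + 1) ≤ N n) (hfin : ∀ n, (N n).FiniteIndex)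
    (hint : (⨅ n, N n) = ⊥) :
    Function.Bijective (fun φ : odometerCentralizer N hle => φ.1 1) ∧
    (∀ φ₁ φ₂ : odometerCentralizer N hle, φ₁.1 (φ₂.1 1) = φ₁.1 1 * φ₂.1 1) ∧
    (∀ φ₁ φ₂ : odometerCentralizer N hle, ∀ x, φ₁.1 (φ₂.1 x) = φ₂.1 (φ₁.1 x)) :=
  odometer_centralizer_iso_general N hle
end

section
/- Let (X, G) be an almost 1-1 extension of a G-odometer (Ḡ, G) via a factor map π, where X is a compact metric space. Then two points x₁, x₂ ∈ X are proximal (inf over g ∈ G of d(g·x₁, g·x₂) equals 0) if and only if π(x₁) = π(x₂). -/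
/-- Two points are proximal for the action of `G` if the infimum of the distances
between the points of their orbits (moved simultaneously) is zero. -/
def IsProximal (G : Type*) {X : Type*} [SMul G X] [PseudoMetricSpace X]
    (x₁ x₂ : X) : Prop :=
  sInf (Set.range fun g : G => dist (g • x₁) (g • x₂)) = 0

lemma sInf_dist_eq_zero_iff {G X : Type*} [Nonempty G] [SMul G X] [PseudoMetricSpace X]
    (x₁ x₂ : X) :
    IsProximal G x₁ x₂ ↔ ∀ ε > 0, ∃ g : G, dist (g • x₁) (g • x₂) < ε := by
  have hbdd : BddBelow (Set.range fun g : G => dist (g • x₁) (g • x₂)) :=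
    ⟨0, by rintro _ ⟨g, rfl⟩; exact dist_nonneg⟩
  have hne : (Set.range fun g : G => dist (g • x₁) (g • x₂)).Nonempty :=
    Set.range_nonempty _
  constructor
  · intro h ε hε
    have : sInf (Set.range fun g : G => dist (g • x₁) (g • x₂)) < ε := by
      rw [h]; exact hε
    obtain ⟨_, ⟨g, rfl⟩, hlt⟩ := (csInf_lt_iff hbdd hne).mp this
    exact ⟨g, hlt⟩
  · intro h
    refine le_antisymm ?_ (le_csInf hne ?_)
    · refine le_of_forall_pos_le_add fun ε hε => ?_
      obtain ⟨g, hg⟩ := h ε hε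
      calc sInf (Set.range fun g : G => dist (g • x₁) (g • x₂))
          ≤ dist (g • x₁) (g • x₂) := csInf_le hbdd ⟨g, rfl⟩
        _ ≤ 0 + ε := by linarith
    · rintro _ ⟨g, rfl⟩; exact dist_nonneg

/-- Let `(X, G)` be a minimal compact metric system which is an almost
1-1 extension, via a factor map `π`, of a `G`-odometer `(Y, G)` (a minimal
equicontinuous system with no distinct proximal pairs).  Then two points of `X` are
proximal if and only if they lie in the same `π`-fiber. -/
theorem proximal_iff_same_fiber {G X Y : Type*} [Group G]
    [MetricSpace X] [CompactSpace X] [MetricSpace Y] [CompactSpace Y]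
    [MulAction G X] [MulAction G Y]
    (hcX : ∀ g : G, Continuous fun x : X => g • x)
    (hcY : ∀ g : G, Continuous fun y : Y => g • y)
    (π : X → Y) (hπc : Continuous π) (hπs : Function.Surjective π)
    (hequiv : ∀ (g : G) (x : X), π (g • x) = g • π x)
    (hXmin : ∀ x : X, Dense (Set.range fun g : G => g • x))
    (hYmin : ∀ y : Y, Dense (Set.range fun g : G => g • y))
    (hYdistal : ∀ y₁ y₂ : Y, IsProximal G y₁ y₂ → y₁ = y₂)
    (y₀ : Y) (x₀ : X) (hfib : π ⁻¹' {y₀} = {x₀}) :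
    ∀ x₁ x₂ : X, IsProximal G x₁ x₂ ↔ π x₁ = π x₂ := by
  intro x₁ x₂
  constructor
  · -- proximal implies same fiber
    intro h
    apply hYdistal
    rw [sInf_dist_eq_zero_iff]
    intro ε hε
    have hπu : UniformContinuous π := CompactSpace.uniformContinuous_of_continuous hπc
    obtain ⟨δ, hδ, hδimp⟩ := Metric.uniformContinuous_iff.mp hπu ε hε
    obtain ⟨g, hg⟩ := (sInf_dist_eq_zero_iff x₁ x₂).mp h δ hδ
    refine ⟨g, ?_⟩
    have := hδimp hg
    rwa [hequiv, hequiv] at this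
  · -- same fiber implies proximal
    intro hxy
    rw [sInf_dist_eq_zero_iff]
    intro ε hε
    -- the closure of the orbit of (x₁, x₂) contains (x₀, x₀)
    set R : Set (X × X) := Set.range fun g : G => (g • x₁, g • x₂) with hR
    have hScomp : IsCompact (closure R) := isClosed_closure.isCompact
    have hpc : Continuous (Prod.map π π) := hπc.prodMap hπc
    have himgcl : IsClosed (Prod.map π π '' closure R) := (hScomp.image hpc).isClosed
    have hsub : Set.range (fun g : G => ((g • π x₁ : Y), (g • π x₁ : Y)))
        ⊆ Prod.map π π '' closure R := by
      rintro _ ⟨g, rfl⟩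
      exact ⟨(g • x₁, g • x₂), subset_closure ⟨g, rfl⟩, by
        simp [Prod.map, hequiv, hxy]⟩
    have hy0 : (y₀, y₀) ∈ Prod.map π π '' closure R := by
      apply himgcl.closure_subset
      refine closure_mono hsub ?_
      have hy : y₀ ∈ closure (Set.range fun g : G => g • π x₁) := hYmin (π x₁) _
      have hdiag : Continuous fun z : Y => (z, z) := continuous_id.prodMk continuous_id
      have : (y₀, y₀) ∈ (fun z : Y => (z, z)) '' closure (Set.range fun g : G => g • π x₁) :=
        ⟨y₀, hy, rfl⟩
      have h2 := (image_closure_subset_closure_image hdiag) this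
      refine closure_mono ?_ h2
      rintro _ ⟨_, ⟨g, rfl⟩, rfl⟩
      exact ⟨g, rfl⟩
    obtain ⟨⟨a, b⟩, hab, heq⟩ := hy0
    have ha : a = x₀ := by
      have : a ∈ π ⁻¹' {y₀} := by
        simp only [Set.mem_preimage, Set.mem_singleton_iff]
        exact congrArg Prod.fst heq
      rw [hfib] at this; exact this
    have hb : b = x₀ := by
      have : b ∈ π ⁻¹' {y₀} := by
        simp only [Set.mem_preimage, Set.mem_singleton_iff]
        exact congrArg Prod.snd heq
      rw [hfib] at this; exact this
    rw [ha, hb] at hab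
    -- now (a, a) ∈ closure R with a = x₀; extract g making dist small
    obtain ⟨_, ⟨g, rfl⟩, hlt⟩ := Metric.mem_closure_iff.mp hab (ε / 2) (by linarith)
    refine ⟨g, ?_⟩
    rw [Prod.dist_eq] at hlt
    have h1 : dist x₀ (g • x₁) < ε / 2 := lt_of_le_of_lt (le_max_left _ _) hlt
    have h2 : dist x₀ (g • x₂) < ε / 2 := lt_of_le_of_lt (le_max_right _ _) hlt
    calc dist (g • x₁) (g • x₂) ≤ dist (g • x₁) x₀ + dist x₀ (g • x₂) := dist_triangle _ _ _
      _ < ε / 2 + ε / 2 := by rw [dist_comm (g • x₁) x₀]; exact add_lt_add h1 h2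
      _ = ε := by ring
end

section
/- Let (X, G) be an almost 1-1 extension of a G-odometer (Y, G) via a factor map π. Every φ in the centralizer C(X, G) preserves π-fibers, and hence induces a well-defined homeomorphism ψ_φ = π ∘ φ ∘ π⁻¹ ∈ C(Y, G) with π ∘ φ = ψ_φ ∘ π. -/
/-- Key lemma: in an almost 1-1 extension, two points in the same fiber can be moved
simultaneously arbitrarily close to each other (near the singleton fiber point). -/
lemma exists_smul_dist_lt {G X Y : Type*} [Group G]
    [MetricSpace X] [CompactSpace X] [MetricSpace Y]
    [MulAction G X] [MulAction G Y]
    (π : X → Y) (hπc : Continuous π)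
    (hequiv : ∀ (g : G) (x : X), π (g • x) = g • π x)
    (hYmin : ∀ y : Y, Dense (Set.range fun g : G => g • y))
    (y₀ : Y) (x₀ : X) (hfib : π ⁻¹' {y₀} = {x₀})
    (x₁ x₂ : X) (h : π x₁ = π x₂) {ε : ℝ} (hε : 0 < ε) :
    ∃ g : G, dist (g • x₁) (g • x₂) < ε := by
  set S : Set X := {x | ε / 2 ≤ dist x x₀} with hS
  have hSclosed : IsClosed S := isClosed_le continuous_const (by fun_prop)
  have hScompact : IsCompact S := hSclosed.isCompact
  set C : Set Y := π '' S with hC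
  have hCclosed : IsClosed C := (hScompact.image hπc).isClosed
  have hy₀ : y₀ ∉ C := by
    rintro ⟨x, hxS, hxy⟩
    have : x ∈ π ⁻¹' {y₀} := hxy
    rw [hfib] at this
    simp only [Set.mem_singleton_iff] at this
    subst this
    simp only [hS, Set.mem_setOf_eq, dist_self] at hxS
    linarith
  obtain ⟨y, hymem, hyC⟩ := (hYmin (π x₁)).exists_mem_open hCclosed.isOpen_compl
    ⟨y₀, hy₀⟩
  obtain ⟨g, rfl⟩ := hymem
  refine ⟨g, ?_⟩
  have h1 : g • x₁ ∉ S := fun hmem => hyC ⟨g • x₁, hmem, (hequiv g x₁)⟩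
  have h2 : g • x₂ ∉ S := fun hmem => hyC ⟨g • x₂, hmem, by rw [hequiv, ← h]⟩
  simp only [hS, Set.mem_setOf_eq, not_le] at h1 h2
  calc dist (g • x₁) (g • x₂) ≤ dist (g • x₁) x₀ + dist x₀ (g • x₂) := dist_triangle _ _ _
    _ < ε / 2 + ε / 2 := by rw [dist_comm x₀]; exact add_lt_add h1 h2
    _ = ε := by ring

/-- Fiber preservation for a continuous equivariant self-map. -/
lemma fiber_preserved {G X Y : Type*} [Group G]
    [MetricSpace X] [CompactSpace X] [MetricSpace Y]
    [MulAction G X] [MulAction G Y]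
    (π : X → Y) (hπc : Continuous π)
    (hequiv : ∀ (g : G) (x : X), π (g • x) = g • π x)
    (hYmin : ∀ y : Y, Dense (Set.range fun g : G => g • y))
    (hYdistal : ∀ y₁ y₂ : Y, IsProximal G y₁ y₂ → y₁ = y₂)
    (y₀ : Y) (x₀ : X) (hfib : π ⁻¹' {y₀} = {x₀})
    (φ : X → X) (hφcont : Continuous φ)
    (hφ : ∀ (g : G) (x : X), φ (g • x) = g • φ x) :
    ∀ x₁ x₂ : X, π x₁ = π x₂ → π (φ x₁) = π (φ x₂) := by
  intro x₁ x₂ h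
  apply hYdistal
  unfold IsProximal
  have hucπ : UniformContinuous π := CompactSpace.uniformContinuous_of_continuous hπc
  have hucφ : UniformContinuous φ := CompactSpace.uniformContinuous_of_continuous hφcont
  set T : Set ℝ := Set.range fun g : G => dist (g • π (φ x₁)) (g • π (φ x₂)) with hT
  have hTne : T.Nonempty := ⟨_, ⟨(1 : G), rfl⟩⟩
  have hTbdd : BddBelow T := ⟨0, by rintro t ⟨g, rfl⟩; exact dist_nonneg⟩
  have hsmall : ∀ ε > 0, ∃ t ∈ T, t < ε := by
    intro ε hε
    obtain ⟨δ₁, hδ₁, hδ₁'⟩ := Metric.uniformContinuous_iff.1 hucπ ε hε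
    obtain ⟨δ₂, hδ₂, hδ₂'⟩ := Metric.uniformContinuous_iff.1 hucφ δ₁ hδ₁
    obtain ⟨g, hg⟩ := exists_smul_dist_lt π hπc hequiv hYmin y₀ x₀ hfib x₁ x₂ h hδ₂
    refine ⟨_, ⟨g, rfl⟩, ?_⟩
    have : dist (φ (g • x₁)) (φ (g • x₂)) < δ₁ := hδ₂' hg
    have h2 : dist (π (φ (g • x₁))) (π (φ (g • x₂))) < ε := hδ₁' this
    rwa [hφ, hφ, hequiv, hequiv] at h2
  refine le_antisymm ?_ (Real.sInf_nonneg (by rintro t ⟨g, rfl⟩; exact dist_nonneg))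
  by_contra hcon
  push_neg at hcon
  obtain ⟨t, htT, ht⟩ := hsmall _ hcon
  exact absurd (csInf_le hTbdd htT) (not_le.2 ht)

/-- Let `(X, G)` be a minimal compact metric system which is an almost
1-1 extension, via `π`, of a `G`-odometer `(Y, G)`.  Every homeomorphism `φ` of `X`
commuting with the `G`-action preserves `π`-fibers, and hence induces a well-defined
homeomorphism `ψ_φ = π ∘ φ ∘ π⁻¹` of `Y` commuting with the `G`-action and satisfying
`π ∘ φ = ψ_φ ∘ π`. -/
theorem centralizer_descends_to_factor {G X Y : Type*} [Group G]
    [MetricSpace X] [CompactSpace X] [MetricSpace Y] [CompactSpace Y]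
    [MulAction G X] [MulAction G Y]
    (hcX : ∀ g : G, Continuous fun x : X => g • x)
    (hcY : ∀ g : G, Continuous fun y : Y => g • y)
    (π : X → Y) (hπc : Continuous π) (hπs : Function.Surjective π)
    (hequiv : ∀ (g : G) (x : X), π (g • x) = g • π x)
    (hXmin : ∀ x : X, Dense (Set.range fun g : G => g • x))
    (hYmin : ∀ y : Y, Dense (Set.range fun g : G => g • y))
    (hYdistal : ∀ y₁ y₂ : Y, IsProximal G y₁ y₂ → y₁ = y₂)
    (y₀ : Y) (x₀ : X) (hfib : π ⁻¹' {y₀} = {x₀})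
    (φ : X ≃ₜ X) (hφ : ∀ (g : G) (x : X), φ (g • x) = g • φ x) :
    (∀ x₁ x₂ : X, π x₁ = π x₂ → π (φ x₁) = π (φ x₂)) ∧
    ∃ ψ : Y ≃ₜ Y, (∀ (g : G) (y : Y), ψ (g • y) = g • ψ y) ∧
      ∀ x : X, π (φ x) = ψ (π x) := by
  have hφ' : ∀ (g : G) (x : X), φ.symm (g • x) = g • φ.symm x := by
    intro g x
    apply φ.injective
    rw [φ.apply_symm_apply, hφ, φ.apply_symm_apply]
  have hpres := fiber_preserved π hπc hequiv hYmin hYdistal y₀ x₀ hfib φ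
    φ.continuous hφ
  have hpres' := fiber_preserved π hπc hequiv hYmin hYdistal y₀ x₀ hfib φ.symm
    φ.symm.continuous hφ'
  refine ⟨hpres, ?_⟩
  set s : Y → X := Function.surjInv hπs with hs
  have hsπ : ∀ y, π (s y) = y := Function.surjInv_eq hπs
  set f : Y → Y := fun y => π (φ (s y)) with hf
  set f' : Y → Y := fun y => π (φ.symm (s y)) with hf'
  have hfx : ∀ x : X, π (φ x) = f (π x) := fun x => hpres x (s (π x)) (hsπ (π x)).symm
  have hfx' : ∀ x : X, π (φ.symm x) = f' (π x) := fun x => hpres' x (s (π x)) (hsπ (π x)).symm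
  have hli : Function.LeftInverse f' f := by
    intro y
    rw [hf, ← hfx' (φ (s y)), φ.symm_apply_apply, hsπ]
  have hri : Function.RightInverse f' f := by
    intro y
    rw [hf', ← hfx (φ.symm (s y)), φ.apply_symm_apply, hsπ]
  have hqm : Topology.IsQuotientMap π := IsClosedMap.isQuotientMap hπc.isClosedMap hπc hπs
  have hfc : Continuous f := by
    rw [hqm.continuous_iff]
    have : f ∘ π = π ∘ φ := by funext x; exact (hfx x).symm
    rw [this]; exact hπc.comp φ.continuous
  have hfc' : Continuous f' := by
    rw [hqm.continuous_iff]
    have : f' ∘ π = π ∘ φ.symm := by funext x; exact (hfx' x).symm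
    rw [this]; exact hπc.comp φ.symm.continuous
  refine ⟨⟨⟨f, f', hli, hri⟩, hfc, hfc'⟩, ?_, ?_⟩
  · intro g y
    obtain ⟨x, rfl⟩ := hπs y
    show f (g • π x) = g • f (π x)
    rw [← hequiv, ← hfx, ← hfx, hφ, hequiv]
  · intro x
    exact hfx x
end

section
/- The centralizer C(X, G) of a minimal almost 1-1 extension (X, G) of a ℤ^d-odometer is abelian. -/
/-!
An equivariant self-map `θ` of `X` moves every fibre of `π` by the same element of `Y`: the
displacement `π (θ y) - π y` is continuous and constant on a dense orbit. Hence the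
centralizer acts on `Y` by translations, which commute, so `φ ∘ ψ` and `ψ ∘ φ` have the
same image under `π`. Over the singleton fibre `{x₀}` this forces them to agree at one
point, and equivariant continuous maps agreeing at a point with dense orbit are equal.
-/

open Set

section EquivariantMaps

variable {G X : Type*} [AddMonoid G] [AddAction G X] [TopologicalSpace X]

theorem exists_forall_eq_add_of_equivariant {Y : Type*} [TopologicalSpace Y] [AddCommGroup Y]
    [IsTopologicalAddGroup Y] [T1Space Y] (ρ : G → Y) {π : X → Y} (hπc : Continuous π)
    (hπ : ∀ (v : G) (y : X), π (v +ᵥ y) = ρ v + π y)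
    {x : X} (hx : Dense (AddAction.orbit G x))
    {θ : X → X} (hθc : Continuous θ) (hθ : ∀ (v : G) (y : X), θ (v +ᵥ y) = v +ᵥ θ y) :
    ∃ c : Y, ∀ y, π (θ y) = c + π y := by
  refine ⟨π (θ x) - π x, fun y => eq_add_of_sub_eq ?_⟩
  have hcont : Continuous fun z => π (θ z) - π z := (hπc.comp hθc).sub hπc
  have hconst : MapsTo (fun z => π (θ z) - π z) (AddAction.orbit G x) {π (θ x) - π x} := by
    rintro _ ⟨v, rfl⟩
    simp only [mem_singleton_iff, hθ, hπ]
    abel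
  simpa [closure_singleton] using map_mem_closure hcont (hx y) hconst

theorem eq_of_equivariant_of_dense_orbit {Z : Type*} [TopologicalSpace Z] [T2Space Z]
    [AddAction G Z] {f g : X → Z} (hfc : Continuous f) (hgc : Continuous g)
    (hf : ∀ (v : G) (y : X), f (v +ᵥ y) = v +ᵥ f y)
    (hg : ∀ (v : G) (y : X), g (v +ᵥ y) = v +ᵥ g y)
    {x : X} (hx : Dense (AddAction.orbit G x)) (hfg : f x = g x) : f = g := by
  refine hfc.ext_on hx hgc ?_
  rintro _ ⟨v, rfl⟩
  simp only [hf, hg, hfg]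

end EquivariantMaps

theorem centralizer_abelian_of_almost_one_to_one_extension_general {d : ℕ} {X Y : Type*}
    [MetricSpace X]
    [MetricSpace Y] [AddCommGroup Y] [IsTopologicalAddGroup Y]
    [AddAction (Fin d → ℤ) X]
    (ρ : (Fin d → ℤ) →+ Y)
    (π : X → Y) (hπc : Continuous π)
    (hequiv : ∀ (v : Fin d → ℤ) (x : X), π (v +ᵥ x) = ρ v + π x)
    (hmin : ∀ x : X, Dense (Set.range fun v : Fin d → ℤ => v +ᵥ x))
    (x₀ : X) (hfib : π ⁻¹' {π x₀} = {x₀})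
    (φ ψ : X ≃ₜ X)
    (hφ : ∀ (v : Fin d → ℤ) (x : X), φ (v +ᵥ x) = v +ᵥ φ x)
    (hψ : ∀ (v : Fin d → ℤ) (x : X), ψ (v +ᵥ x) = v +ᵥ ψ x) :
    ∀ x : X, φ (ψ x) = ψ (φ x) := by
  obtain ⟨a, ha⟩ := exists_forall_eq_add_of_equivariant ρ hπc hequiv (hmin x₀) φ.continuous hφ
  obtain ⟨b, hb⟩ := exists_forall_eq_add_of_equivariant ρ hπc hequiv (hmin x₀) ψ.continuous hψ
  set x₁ := ψ.symm (φ.symm x₀)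
  have hφψ : φ (ψ x₁) = x₀ := by simp [x₁]
  have hψφ : ψ (φ x₁) = x₀ := by
    have hfibre : ψ (φ x₁) ∈ π ⁻¹' {π x₀} := by
      rw [mem_preimage, mem_singleton_iff, ← hφψ, ha, hb, hb, ha, add_left_comm]
    rwa [hfib] at hfibre
  have hcomm : (fun x => φ (ψ x)) = fun x => ψ (φ x) :=
    eq_of_equivariant_of_dense_orbit (φ.continuous.comp ψ.continuous)
      (ψ.continuous.comp φ.continuous) (fun v y => by simp only [hφ, hψ])
      (fun v y => by simp only [hφ, hψ]) (hmin x₁) (hφψ.trans hψφ.symm)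
  exact congrFun hcomm

/-- The centralizer `C(X, G)` of a minimal almost 1-1 extension
`(X, ℤ^d)` of a `ℤ^d`-odometer is abelian.  Here the `ℤ^d`-odometer is presented as a
compact metrizable abelian topological group `Y` together with a homomorphism
`ρ : ℤ^d → Y` with dense range, the action of `ℤ^d` on `Y` being translation by `ρ`,
and `π : X → Y` is an equivariant almost 1-1 factor map. -/
theorem centralizer_abelian_of_almost_one_to_one_extension {d : ℕ} {X Y : Type*}
    [MetricSpace X] [CompactSpace X]
    [MetricSpace Y] [CompactSpace Y] [AddCommGroup Y] [IsTopologicalAddGroup Y]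
    [AddAction (Fin d → ℤ) X]
    (hc : ∀ v : Fin d → ℤ, Continuous fun x : X => v +ᵥ x)
    (ρ : (Fin d → ℤ) →+ Y) (hρ : DenseRange ρ)
    (π : X → Y) (hπc : Continuous π) (hπs : Function.Surjective π)
    (hequiv : ∀ (v : Fin d → ℤ) (x : X), π (v +ᵥ x) = ρ v + π x)
    (hmin : ∀ x : X, Dense (Set.range fun v : Fin d → ℤ => v +ᵥ x))
    (x₀ : X) (hfib : π ⁻¹' {π x₀} = {x₀})
    (φ ψ : X ≃ₜ X)
    (hφ : ∀ (v : Fin d → ℤ) (x : X), φ (v +ᵥ x) = v +ᵥ φ x)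
    (hψ : ∀ (v : Fin d → ℤ) (x : X), ψ (v +ᵥ x) = v +ᵥ ψ x) :
    ∀ x : X, φ (ψ x) = ψ (φ x) :=
  centralizer_abelian_of_almost_one_to_one_extension_general ρ π hπc hequiv hmin x₀ hfib φ ψ hφ hψ
end
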